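/- Taylor-type norm bound: let Z be a random variable with 0 ≤ Z ≤ K for a constant K > 0 and E[Z] = 1, and let 0 ≤ u ≤ 1. Then 1 + u·Ent(Z) - u²·L₁(K) ≤ ‖Z‖_{1+u} ≤ 1 + u·Ent(Z) + u²·L₀(K), where L₀(K) = (1/2)·max{K^u, 1}·max_{0≤z≤K} z(log z)² and L₁(K) = M + M²/2 with M = max_{0≤z≤K} |z log z|. -/

import Mathlib

open Finset Real

noncomputable def fexp {Ω : Type*} [Fintype Ω] (w : Ω → ℝ) (f : Ω → ℝ) : ℝ :=
  ∑ ω, w ω * f ω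

def IsProbWeight {Ω : Type*} [Fintype Ω] (w : Ω → ℝ) : Prop :=
  (∀ ω, 0 ≤ w ω) ∧ ∑ ω, w ω = 1

noncomputable def maxCorr {Ω A B : Type*} [Fintype Ω] (w : Ω → ℝ)
    (X : Ω → A) (Y : Ω → B) : ℝ :=
  sSup { r : ℝ | ∃ f : A → ℝ, ∃ g : B → ℝ,
    fexp w (fun ω => f (X ω)) = 0 ∧ fexp w (fun ω => g (Y ω)) = 0 ∧
    fexp w (fun ω => (f (X ω))^2) ≤ 1 ∧ fexp w (fun ω => (g (Y ω))^2) ≤ 1 ∧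
    r = fexp w (fun ω => f (X ω) * g (Y ω)) }

noncomputable def ent {Ω : Type*} [Fintype Ω] (w Z : Ω → ℝ) : ℝ :=
  fexp w (fun ω => Z ω * Real.log (Z ω)) - fexp w Z * Real.log (fexp w Z)

/-!
Write `Z ^ (1 + u) = Z * exp (u * log Z)`. The second-order Taylor bound
`exp x ≤ 1 + x + x ^ 2 / 2 * max (exp x) 1`, with `exp (u * log Z) = Z ^ u ≤ K ^ u`, gives
`E[Z ^ (1 + u)] ≤ 1 + u * Ent Z + u ^ 2 * L₀`; as `E[Z ^ (1 + u)] ≥ 1`, the root of order `1 + u`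
can only make it smaller. Conversely `exp x ≥ 1 + x` gives `E[Z ^ (1 + u)] ≥ 1 + t` with
`t = u * Ent Z ∈ [0, u * M]`, and `(1 + t) ^ (1 - r) ≥ (1 + t) * (1 - r * t)` for
`r = u / (1 + u) ≤ min u (1 / 2)` leaves an error of at most `u ^ 2 * (M + M ^ 2 / 2)`.
-/

namespace Real

lemma exp_le_one_add_add_sq_div_two {x : ℝ} (hx : x ≤ 0) : exp x ≤ 1 + x + x ^ 2 / 2 := by
  have hmono : Monotone fun t => exp t - 1 - t - t ^ 2 / 2 := by
    refine monotone_of_hasDerivAt_nonneg (f' := fun t => exp t - 1 - t) (fun t => ?_)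
      fun t => show 0 ≤ exp t - 1 - t by linarith [add_one_le_exp t]
    exact ((((hasDerivAt_exp t).sub_const 1).sub (hasDerivAt_id t)).sub
      ((hasDerivAt_pow 2 t).div_const 2)).congr_deriv (by norm_num)
  linarith [hmono hx, exp_zero]

lemma exp_le_one_add_add_sq_div_two_mul_exp {x : ℝ} (hx : 0 ≤ x) :
    exp x ≤ 1 + x + x ^ 2 / 2 * exp x := by
  have hmono : Monotone fun t => 1 + t + t ^ 2 / 2 * exp t - exp t := by
    refine monotone_of_hasDerivAt_nonneg
      (f' := fun t => 1 + (t * exp t + t ^ 2 / 2 * exp t) - exp t) (fun t => ?_) fun t => ?_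
    · exact ((((hasDerivAt_id t).const_add 1).add
        (((hasDerivAt_pow 2 t).div_const 2).mul (hasDerivAt_exp t))).sub
          (hasDerivAt_exp t)).congr_deriv (by norm_num)
    · have hmul : exp t * (1 - t) ≤ 1 := by
        have := mul_le_mul_of_nonneg_left (add_one_le_exp (-t)) (exp_pos t).le
        rwa [← exp_add, add_neg_cancel, exp_zero, neg_add_eq_sub] at this
      show 0 ≤ 1 + (t * exp t + t ^ 2 / 2 * exp t) - exp t
      nlinarith [exp_pos t, sq_nonneg t]
  linarith [hmono hx, exp_zero]

lemma exp_le_one_add_add_sq_div_two_mul_max (x : ℝ) :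
    exp x ≤ 1 + x + x ^ 2 / 2 * max (exp x) 1 := by
  rcases le_total x 0 with hx | hx
  · simpa [max_eq_right (exp_le_one_iff.mpr hx)] using exp_le_one_add_add_sq_div_two hx
  · simpa [max_eq_left (one_le_exp hx)] using exp_le_one_add_add_sq_div_two_mul_exp hx

lemma one_add_mul_one_sub_mul_le_rpow {t r : ℝ} (ht : -1 < t) (hr : 0 ≤ r) :
    (1 + t) * (1 - r * t) ≤ (1 + t) ^ (1 - r) := by
  have h1t : 0 < 1 + t := by linarith
  have hsplit : (1 + t) ^ (1 - r) = (1 + t) * exp (-(r * log (1 + t))) := by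
    rw [sub_eq_add_neg, rpow_add h1t, rpow_one, rpow_def_of_pos h1t]
    ring_nf
  rw [hsplit]
  gcongr
  calc 1 - r * t ≤ 1 - r * log (1 + t) := by gcongr; linarith [log_le_sub_one_of_pos h1t]
    _ ≤ exp (-(r * log (1 + t))) := by linarith [add_one_le_exp (-(r * log (1 + t)))]

lemma one_add_mul_sub_le_rpow_one_div {u e M : ℝ} (hu0 : 0 ≤ u) (hu1 : u ≤ 1) (he : 0 ≤ e)
    (heM : e ≤ M) : 1 + u * e - u ^ 2 * (M + M ^ 2 / 2) ≤ (1 + u * e) ^ (1 / (1 + u)) := by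
  have h1u : 0 < 1 + u := by linarith
  have hr : 1 / (1 + u) = 1 - u / (1 + u) := by field_simp; ring
  set r := u / (1 + u)
  have hr0 : 0 ≤ r := by positivity
  have hru : r ≤ u := div_le_self hu0 (by linarith)
  have hr_half : r ≤ 1 / 2 := by rw [div_le_iff₀ h1u]; linarith
  have hlin : r * (u * e) ≤ u ^ 2 * M :=
    calc r * (u * e) ≤ u * (u * e) := by gcongr
      _ ≤ u ^ 2 * M := by nlinarith [mul_le_mul_of_nonneg_left heM (sq_nonneg u)]
  have hquad : r * (u * e) ^ 2 ≤ u ^ 2 * (M ^ 2 / 2) :=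
    calc r * (u * e) ^ 2 ≤ 1 / 2 * (u * e) ^ 2 := by gcongr
      _ ≤ u ^ 2 * (M ^ 2 / 2) := by nlinarith [pow_le_pow_left₀ he heM 2, sq_nonneg u]
  rw [hr]
  refine le_trans ?_ (one_add_mul_one_sub_mul_le_rpow (by nlinarith) hr0)
  nlinarith

lemma mul_log_sq_eq {z : ℝ} (hz : 0 ≤ z) : z * log z ^ 2 = 4 * (√z * log √z) ^ 2 := by
  rw [log_sqrt hz, mul_pow, sq_sqrt hz]
  ring

lemma continuousOn_mul_log_sq : ContinuousOn (fun z => z * log z ^ 2) (Set.Ici 0) :=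
  (continuous_const.mul ((continuous_mul_log.comp continuous_sqrt).pow 2)).continuousOn.congr
    fun _ hz => mul_log_sq_eq hz

lemma rpow_one_add_eq_mul_exp {z : ℝ} (hz : 0 < z) (u : ℝ) :
    z ^ (1 + u) = z * exp (u * log z) := by
  rw [rpow_add hz, rpow_one, rpow_def_of_pos hz, mul_comm (log z)]

lemma add_mul_mul_log_le_rpow_one_add {z : ℝ} (hz : 0 ≤ z) (u : ℝ) :
    z + u * (z * log z) ≤ z ^ (1 + u) := by
  rcases hz.eq_or_lt with rfl | hz
  · simpa using rpow_nonneg le_rfl (1 + u)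
  · rw [rpow_one_add_eq_mul_exp hz]
    calc z + u * (z * log z) = z * (u * log z + 1) := by ring
      _ ≤ z * exp (u * log z) := by gcongr; exact add_one_le_exp _

lemma rpow_one_add_le {z K u : ℝ} (hz : 0 ≤ z) (hzK : z ≤ K) (hu : 0 ≤ u) :
    z ^ (1 + u) ≤ z + u * (z * log z) + u ^ 2 / 2 * max (K ^ u) 1 * (z * log z ^ 2) := by
  rcases hz.eq_or_lt with rfl | hz
  · simp [zero_rpow (by linarith : 1 + u ≠ 0)]
  · have hmax : max (exp (u * log z)) 1 ≤ max (K ^ u) 1 := by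
      rw [mul_comm, ← rpow_def_of_pos hz]
      exact max_le_max_right 1 (rpow_le_rpow hz.le hzK hu)
    rw [rpow_one_add_eq_mul_exp hz]
    calc z * exp (u * log z)
        ≤ z * (1 + u * log z + (u * log z) ^ 2 / 2 * max (K ^ u) 1) := by
          gcongr
          exact (exp_le_one_add_add_sq_div_two_mul_max _).trans (by gcongr)
      _ = z + u * (z * log z) + u ^ 2 / 2 * max (K ^ u) 1 * (z * log z ^ 2) := by ring

end Real

lemma ContinuousOn.le_ciSup_of_isCompact {α : Type*} [TopologicalSpace α] {f : α → ℝ}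
    {s : Set α} (hf : ContinuousOn f s) (hs : IsCompact s) {z : α} (hz : z ∈ s) :
    f z ≤ ⨆ x : s, f x :=
  le_ciSup (f := fun x : s => f x) (Set.image_eq_range f s ▸ hs.bddAbove_image hf) ⟨z, hz⟩

section fexp

variable {Ω : Type*} [Fintype Ω] {w : Ω → ℝ}

lemma fexp_mono (hw : ∀ ω, 0 ≤ w ω) {f g : Ω → ℝ} (h : ∀ ω, f ω ≤ g ω) :
    fexp w f ≤ fexp w g :=
  sum_le_sum fun ω _ => mul_le_mul_of_nonneg_left (h ω) (hw ω)

lemma fexp_add (f g : Ω → ℝ) : fexp w (fun ω => f ω + g ω) = fexp w f + fexp w g := by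
  simp only [fexp, mul_add, sum_add_distrib]

lemma fexp_const_mul (c : ℝ) (f : Ω → ℝ) : fexp w (fun ω => c * f ω) = c * fexp w f := by
  simp only [fexp, mul_sum, mul_left_comm]

lemma fexp_const (hw : ∑ ω, w ω = 1) (c : ℝ) : fexp w (fun _ => c) = c := by
  simp only [fexp, ← sum_mul, hw, one_mul]

variable {Z : Ω → ℝ}

lemma ent_eq_fexp_mul_log (hZ : fexp w Z = 1) : ent w Z = fexp w (fun ω => Z ω * log (Z ω)) := by
  simp [ent, hZ]

lemma ent_nonneg_of_fexp_eq_one (hw : IsProbWeight w) (hZ0 : ∀ ω, 0 ≤ Z ω) (hZ : fexp w Z = 1) :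
    0 ≤ ent w Z :=
  calc 0 = fexp w Z + -1 := by rw [hZ]; ring
    _ = fexp w (fun ω => Z ω + -1) := by rw [fexp_add, fexp_const hw.2]
    _ ≤ fexp w (fun ω => Z ω * log (Z ω)) :=
      fexp_mono hw.1 fun ω => by linarith [self_sub_one_le_mul_log (hZ0 ω)]
    _ = ent w Z := (ent_eq_fexp_mul_log hZ).symm

lemma one_add_mul_ent_le_fexp_rpow (hw : IsProbWeight w) (hZ0 : ∀ ω, 0 ≤ Z ω)
    (hZ : fexp w Z = 1) (u : ℝ) : 1 + u * ent w Z ≤ fexp w (fun ω => Z ω ^ (1 + u)) :=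
  calc 1 + u * ent w Z = fexp w (fun ω => Z ω + u * (Z ω * log (Z ω))) := by
        rw [fexp_add, fexp_const_mul, hZ, ent_eq_fexp_mul_log hZ]
    _ ≤ _ := fexp_mono hw.1 fun ω => add_mul_mul_log_le_rpow_one_add (hZ0 ω) u

lemma fexp_rpow_le (hw : IsProbWeight w) {K u S : ℝ} (hZ0 : ∀ ω, 0 ≤ Z ω) (hZK : ∀ ω, Z ω ≤ K)
    (hZ : fexp w Z = 1) (hu : 0 ≤ u) (hS : ∀ ω, Z ω * log (Z ω) ^ 2 ≤ S) :
    fexp w (fun ω => Z ω ^ (1 + u)) ≤ 1 + u * ent w Z + u ^ 2 / 2 * max (K ^ u) 1 * S :=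
  calc fexp w (fun ω => Z ω ^ (1 + u))
      ≤ fexp w (fun ω => Z ω + u * (Z ω * log (Z ω)) + u ^ 2 / 2 * max (K ^ u) 1 * S) :=
        fexp_mono hw.1 fun ω => (rpow_one_add_le (hZ0 ω) (hZK ω) hu).trans (by gcongr; exact hS ω)
    _ = 1 + u * ent w Z + u ^ 2 / 2 * max (K ^ u) 1 * S := by
        rw [fexp_add, fexp_add, fexp_const_mul, fexp_const hw.2, hZ, ent_eq_fexp_mul_log hZ]

end fexp

theorem taylor_norm_bound_general {Ω : Type*} [Fintype Ω] (w : Ω → ℝ) (hw : IsProbWeight w)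
    (Z : Ω → ℝ) (K : ℝ) (hZ0 : ∀ ω, 0 ≤ Z ω) (hZK : ∀ ω, Z ω ≤ K)
    (hEZ : fexp w Z = 1) (u : ℝ) (hu0 : 0 ≤ u) (hu1 : u ≤ 1)
    (M L0 L1 : ℝ)
    (hM : M = ⨆ z : Set.Icc (0:ℝ) K, |(z : ℝ) * Real.log z|)
    (hL0 : L0 = (1/2) * max (K ^ u) 1 * ⨆ z : Set.Icc (0:ℝ) K, (z : ℝ) * (Real.log z)^2)
    (hL1 : L1 = M + M^2 / 2) :
    1 + u * ent w Z - u^2 * L1 ≤ (fexp w (fun ω => Z ω ^ (1+u))) ^ (1/(1+u)) ∧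
    (fexp w (fun ω => Z ω ^ (1+u))) ^ (1/(1+u)) ≤ 1 + u * ent w Z + u^2 * L0 := by
  have hZmem : ∀ ω, Z ω ∈ Set.Icc 0 K := fun ω => ⟨hZ0 ω, hZK ω⟩
  have hZM : ∀ ω, Z ω * log (Z ω) ≤ M := fun ω => hM ▸ (le_abs_self _).trans
    ((continuous_mul_log.abs.continuousOn).le_ciSup_of_isCompact isCompact_Icc (hZmem ω))
  have hZS : ∀ ω, Z ω * log (Z ω) ^ 2 ≤ ⨆ z : Set.Icc (0:ℝ) K, (z : ℝ) * (Real.log z)^2 :=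
    fun ω => (continuousOn_mul_log_sq.mono Set.Icc_subset_Ici_self).le_ciSup_of_isCompact
      isCompact_Icc (hZmem ω)
  have hent0 := ent_nonneg_of_fexp_eq_one hw hZ0 hEZ
  have hentM : ent w Z ≤ M := by
    rw [ent_eq_fexp_mul_log hEZ, ← fexp_const hw.2 M]
    exact fexp_mono hw.1 hZM
  have hlower := one_add_mul_ent_le_fexp_rpow hw hZ0 hEZ u
  constructor
  · rw [hL1]
    exact (one_add_mul_sub_le_rpow_one_div hu0 hu1 hent0 hentM).trans
      (rpow_le_rpow (by positivity) hlower (by positivity))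
  · calc (fexp w (fun ω => Z ω ^ (1+u))) ^ (1/(1+u)) ≤ fexp w (fun ω => Z ω ^ (1+u)) :=
          rpow_le_self_of_one_le ((le_add_of_nonneg_right (mul_nonneg hu0 hent0)).trans hlower)
            (by rw [div_le_one (by linarith)]; linarith)
      _ ≤ 1 + u * ent w Z + u ^ 2 / 2 * max (K ^ u) 1 * _ := fexp_rpow_le hw hZ0 hZK hEZ hu0 hZS
      _ = 1 + u * ent w Z + u^2 * L0 := by rw [hL0]; ring

theorem taylor_norm_bound {Ω : Type*} [Fintype Ω] (w : Ω → ℝ) (hw : IsProbWeight w)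
    (Z : Ω → ℝ) (K : ℝ) (hK : 0 < K) (hZ0 : ∀ ω, 0 ≤ Z ω) (hZK : ∀ ω, Z ω ≤ K)
    (hEZ : fexp w Z = 1) (u : ℝ) (hu0 : 0 ≤ u) (hu1 : u ≤ 1)
    (M L0 L1 : ℝ)
    (hM : M = ⨆ z : Set.Icc (0:ℝ) K, |(z : ℝ) * Real.log z|)
    (hL0 : L0 = (1/2) * max (K ^ u) 1 * ⨆ z : Set.Icc (0:ℝ) K, (z : ℝ) * (Real.log z)^2)
    (hL1 : L1 = M + M^2 / 2) :
    1 + u * ent w Z - u^2 * L1 ≤ (fexp w (fun ω => Z ω ^ (1+u))) ^ (1/(1+u)) ∧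
    (fexp w (fun ω => Z ω ^ (1+u))) ^ (1/(1+u)) ≤ 1 + u * ent w Z + u^2 * L0 :=
  taylor_norm_bound_general w hw Z K hZ0 hZK hEZ u hu0 hu1 M L0 L1 hM hL0 hL1
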